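/- Fix η0, x, β ∈ ℝ and σ > 0. Let Y_1, Y_2, … be i.i.d. {0,1}-valued random variables with P(Y_j = 1) = Φ(η0). For each m let g_m(η) = (∏_{j=1}^m f(Y_j|η)) σ^{−1} φ((η − βx)/σ). Then the posterior mean (∫_ℝ η g_m(η) dη) / (∫_ℝ g_m(η) dη) converges in probability to η0 as m → ∞. -/

import Mathlib

/-!
If `k` of the first `m` responses equal one and `t = k / m`, the likelihood is
`Φ(η)^k (1 - Φ(η))^(m-k) = exp (m ψ(t, Φ η))` with `ψ(t, u) = t log u + (1 - t) log (1 - u)`.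
As a function of `u`, `ψ(t, ·)` increases up to `u = t` and decreases after it, so for `t` close
to `p = Φ η₀` there is a uniform gap `γ > 0` between the values of `ψ(t, Φ η)` for `η` near `η₀`
and for `|η - η₀| ≥ ε / 2`. The posterior mass at distance `≥ ε / 2` from `η₀` is then
`O(e^{-mγ})` relative to the mass near `η₀`, which puts the posterior mean within `ε` of `η₀`.
By Chebyshev's inequality, `|k / m - p| < δ` holds with probability tending to one.
-/

open MeasureTheory Filter Real ProbabilityTheory

/-- The standard normal density `φ(s) = exp(−s²/2)/√(2π)`. -/
noncomputable def stdPhi (s : ℝ) : ℝ := Real.exp (-s ^ 2 / 2) / Real.sqrt (2 * Real.pi)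

/-- The standard normal CDF `Φ(t) = ∫_{−∞}^t φ(s) ds`. -/
noncomputable def stdPhiCDF (t : ℝ) : ℝ := ∫ s in Set.Iic t, stdPhi s

/-- The probit Bernoulli density `f(y|η) = Φ(η)^y (1−Φ(η))^{1−y}` for `y ∈ {0,1}`. -/
noncomputable def probitDens (y η : ℝ) : ℝ := if y = 1 then stdPhiCDF η else 1 - stdPhiCDF η

/-- The mixed-model likelihood contribution
`L_m(β,σ;y,x) = ∫ (∏_{j<m} f(y_j|η)) σ⁻¹ φ((η−βx)/σ) dη`. -/
noncomputable def Lcontrib (m : ℕ) (β σ : ℝ) (y : ℕ → ℝ) (x : ℝ) : ℝ :=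
  ∫ η : ℝ, (∏ j ∈ Finset.range m, probitDens (y j) η) * (σ⁻¹ * stdPhi ((η - β * x) / σ))

open scoped NNReal Finset Topology

lemma stdPhi_eq_gaussianPDFReal : stdPhi = gaussianPDFReal 0 1 := by
  funext s
  simp [stdPhi, gaussianPDFReal, div_eq_inv_mul]

lemma inv_mul_stdPhi_div_eq_gaussianPDFReal {σ : ℝ} (hσ : 0 < σ) (c η : ℝ) :
    σ⁻¹ * stdPhi ((η - c) / σ) = gaussianPDFReal c ⟨σ ^ 2, sq_nonneg σ⟩ η := by
  rw [stdPhi_eq_gaussianPDFReal, div_eq_inv_mul, gaussianPDFReal_inv_mul hσ.ne',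
    gaussianPDFReal_sub, abs_of_pos hσ, inv_mul_cancel_left₀ hσ.ne']
  congr 1
  · simp
  · exact mul_one _

lemma integrable_mul_gaussianPDFReal (μ : ℝ) (v : ℝ≥0) :
    Integrable fun x => x * gaussianPDFReal μ v x := by
  rcases eq_or_ne v 0 with rfl | hv
  · simp
  have h := (memLp_id_gaussianReal (μ := μ) (v := v) 1).integrable le_rfl
  rw [gaussianReal_of_var_ne_zero _ hv, integrable_withDensity_iff_integrable_smul'
    (measurable_gaussianPDF μ v) (ae_of_all _ fun _ => gaussianPDF_lt_top)] at h
  simpa [toReal_gaussianPDF, mul_comm] using h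

lemma setIntegral_pos_of_pos {X : Type*} [MeasurableSpace X] {μ : Measure X} {f : X → ℝ}
    (hf : Integrable f μ) (hpos : ∀ x, 0 < f x) {s : Set X} (hs : μ s ≠ 0) :
    0 < ∫ x in s, f x ∂μ := by
  rw [setIntegral_pos_iff_support_of_nonneg_ae (ae_of_all _ fun x => (hpos x).le) hf.integrableOn,
    Function.support_eq_univ fun x => (hpos x).ne', Set.univ_inter]
  exact pos_iff_ne_zero.2 hs

lemma integrable_stdPhi : Integrable stdPhi :=
  stdPhi_eq_gaussianPDFReal ▸ integrable_gaussianPDFReal 0 1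

lemma stdPhi_pos (s : ℝ) : 0 < stdPhi s :=
  stdPhi_eq_gaussianPDFReal ▸ gaussianPDFReal_pos 0 1 s one_ne_zero

lemma setIntegral_stdPhi_pos {s : Set ℝ} (hs : volume s ≠ 0) : 0 < ∫ x in s, stdPhi x :=
  setIntegral_pos_of_pos integrable_stdPhi stdPhi_pos hs

lemma stdPhiCDF_pos (t : ℝ) : 0 < stdPhiCDF t :=
  setIntegral_stdPhi_pos (by simp)

lemma stdPhiCDF_lt_one (t : ℝ) : stdPhiCDF t < 1 := by
  have h : stdPhiCDF t + ∫ s in Set.Ioi t, stdPhi s = 1 := by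
    rw [stdPhiCDF, ← Set.compl_Iic, integral_add_compl measurableSet_Iic integrable_stdPhi,
      stdPhi_eq_gaussianPDFReal, integral_gaussianPDFReal_eq_one 0 one_ne_zero]
  linarith [setIntegral_stdPhi_pos (s := Set.Ioi t) (by simp)]

lemma stdPhiCDF_strictMono : StrictMono stdPhiCDF := by
  intro a b hab
  have h : stdPhiCDF b = stdPhiCDF a + ∫ s in Set.Ioc a b, stdPhi s := by
    rw [stdPhiCDF, stdPhiCDF, ← Set.Iic_union_Ioc_eq_Iic hab.le, setIntegral_union
      (Set.Iic_disjoint_Ioc le_rfl) measurableSet_Ioc integrable_stdPhi.integrableOn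
      integrable_stdPhi.integrableOn]
  linarith [setIntegral_stdPhi_pos (s := Set.Ioc a b) (by simp [hab])]

lemma continuous_stdPhiCDF : Continuous stdPhiCDF :=
  continuous_iff_continuousAt.2 fun t =>
    (integrable_stdPhi.integrableOn.continuousOn_Iic_primitive_Iic (a₀ := t + 1)).continuousAt
      (Iic_mem_nhds (by linarith))

noncomputable def bernLogLik (t u : ℝ) : ℝ := t * Real.log u + (1 - t) * Real.log (1 - u)

lemma bernLogLik_one_sub (t u : ℝ) : bernLogLik (1 - t) (1 - u) = bernLogLik t u := by
  simp only [bernLogLik, sub_sub_cancel]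
  ring

lemma bernLogLik_lt_of_lt_of_le {t u v : ℝ} (hu : 0 < u) (huv : u < v) (hvt : v ≤ t)
    (hv1 : v < 1) : bernLogLik t u < bernLogLik t v := by
  have hv : 0 < v := hu.trans huv
  have hv1' : 0 < 1 - v := by linarith
  -- both bounds are `log x ≤ x - 1`, at `x = u / v` and at `x = (1 - u) / (1 - v)`
  have hA : (v - u) / v < Real.log v - Real.log u := by
    have h := Real.log_lt_sub_one_of_pos (div_pos hu hv) ((div_lt_one hv).2 huv).ne
    rw [Real.log_div hu.ne' hv.ne'] at h
    have : (v - u) / v = 1 - u / v := by field_simp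
    linarith
  have hB : Real.log (1 - u) - Real.log (1 - v) ≤ (v - u) / (1 - v) := by
    have h := Real.log_le_sub_one_of_pos (div_pos (by linarith : 0 < 1 - u) hv1')
    rw [Real.log_div (by linarith) (by linarith)] at h
    have : (v - u) / (1 - v) = (1 - u) / (1 - v) - 1 := by field_simp; ring
    linarith
  have hB0 : 0 ≤ Real.log (1 - u) - Real.log (1 - v) :=
    sub_nonneg.2 (Real.log_le_log (by linarith) (by linarith))
  have hvA : v - u < t * (Real.log v - Real.log u) := by
    calc v - u = v * ((v - u) / v) := by field_simp
      _ < v * (Real.log v - Real.log u) := mul_lt_mul_of_pos_left hA hv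
      _ ≤ t * (Real.log v - Real.log u) :=
        mul_le_mul_of_nonneg_right hvt ((div_pos (by linarith) hv).trans hA).le
  have hvB : (1 - t) * (Real.log (1 - u) - Real.log (1 - v)) ≤ v - u := by
    calc (1 - t) * (Real.log (1 - u) - Real.log (1 - v))
        ≤ (1 - v) * (Real.log (1 - u) - Real.log (1 - v)) := by gcongr
      _ ≤ (1 - v) * ((v - u) / (1 - v)) := by gcongr
      _ = v - u := by field_simp
  simp only [bernLogLik]
  linarith

lemma bernLogLik_lt_of_lt_of_ge {t u v : ℝ} (hu1 : u < 1) (hvu : v < u) (htv : t ≤ v)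
    (hv0 : 0 < v) : bernLogLik t u < bernLogLik t v := by
  rw [← bernLogLik_one_sub t u, ← bernLogLik_one_sub t v]
  exact bernLogLik_lt_of_lt_of_le (by linarith) (by linarith) (by linarith) (by linarith)

lemma bernLogLik_le_of_le_of_le {t u v : ℝ} (hu : 0 < u) (huv : u ≤ v) (hvt : v ≤ t)
    (hv1 : v < 1) : bernLogLik t u ≤ bernLogLik t v := by
  rcases huv.eq_or_lt with rfl | huv
  · rfl
  · exact (bernLogLik_lt_of_lt_of_le hu huv hvt hv1).le

lemma bernLogLik_le_of_le_of_ge {t u v : ℝ} (hu1 : u < 1) (hvu : v ≤ u) (htv : t ≤ v)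
    (hv0 : 0 < v) : bernLogLik t u ≤ bernLogLik t v := by
  rcases hvu.eq_or_lt with rfl | hvu
  · rfl
  · exact (bernLogLik_lt_of_lt_of_ge hu1 hvu htv hv0).le

lemma bernLogLik_le_max {t u q₁ q₂ : ℝ} (hq₁ : 0 < q₁) (hq₂ : q₂ < 1) (ht : t ∈ Set.Icc q₁ q₂)
    (hu : u ∈ Set.Ioo 0 1) (hu' : u ≤ q₁ ∨ q₂ ≤ u) :
    bernLogLik t u ≤ max (bernLogLik t q₁) (bernLogLik t q₂) := by
  rcases hu' with hu' | hu'
  · exact (bernLogLik_le_of_le_of_le hu.1 hu' ht.1 (by linarith [ht.1, ht.2])).trans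
      (le_max_left _ _)
  · exact (bernLogLik_le_of_le_of_ge hu.2 hu' ht.2 (by linarith [ht.1, ht.2])).trans
      (le_max_right _ _)

lemma min_bernLogLik_le {t u u₁ u₂ : ℝ} (hu₁ : 0 < u₁) (hu₂ : u₂ < 1) (hu : u ∈ Set.Icc u₁ u₂) :
    min (bernLogLik t u₁) (bernLogLik t u₂) ≤ bernLogLik t u := by
  rcases le_total u t with hut | htu
  · exact (min_le_left _ _).trans (bernLogLik_le_of_le_of_le hu₁ hu.1 hut (by linarith [hu.2]))
  · exact (min_le_right _ _).trans (bernLogLik_le_of_le_of_ge hu₂ hu.2 htu (by linarith [hu.1]))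

lemma exists_bernLogLik_gap {F : ℝ → ℝ} (hF : StrictMono F) (hFc : Continuous F)
    (hF0 : ∀ x, 0 < F x) (hF1 : ∀ x, F x < 1) (η₀ : ℝ) {ε : ℝ} (hε : 0 < ε) :
    ∃ r > 0, ∃ δ > 0, ∃ γ > 0, ∀ t, |t - F η₀| < δ → ∃ b,
      (∀ η, ε ≤ |η - η₀| → bernLogLik t (F η) + γ ≤ b) ∧
      (∀ η, |η - η₀| ≤ r → b ≤ bernLogLik t (F η)) := by
  set p := F η₀
  set q₁ := F (η₀ - ε)
  set q₂ := F (η₀ + ε)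
  have hq₁ : q₁ < p := hF (by linarith)
  have hq₂ : p < q₂ := hF (by linarith)
  set outer := fun t => max (bernLogLik t q₁) (bernLogLik t q₂)
  have hpeak : outer p < bernLogLik p p :=
    max_lt (bernLogLik_lt_of_lt_of_le (hF0 _) hq₁ le_rfl (hF1 _))
      (bernLogLik_lt_of_lt_of_ge (hF1 _) hq₂ le_rfl (hF0 _))
  have hcont_s : Continuous fun s => bernLogLik p (F (η₀ + s)) := by
    have hF' : Continuous fun s => F (η₀ + s) := hFc.comp (continuous_const_add η₀)
    exact (continuous_const.mul (hF'.log fun s => (hF0 _).ne')).add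
      (continuous_const.mul ((continuous_const.sub hF').log fun s => (sub_pos.2 (hF1 _)).ne'))
  obtain ⟨r₀, hr₀, hr⟩ := Metric.eventually_nhds_iff.1 <|
    (hcont_s.tendsto 0).eventually (lt_mem_nhds (by simpa using hpeak))
  obtain ⟨r, hr_pos, hr_lt⟩ : ∃ r, 0 < r ∧ r < r₀ := ⟨r₀ / 2, half_pos hr₀, half_lt_self hr₀⟩
  have hr_near : ∀ s, |s| ≤ r → outer p < bernLogLik p (F (η₀ + s)) := fun s hs =>
    hr (by rw [Real.dist_eq, sub_zero]; linarith)
  set u₁ := F (η₀ - r)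
  set u₂ := F (η₀ + r)
  set gap := fun t => min (bernLogLik t u₁) (bernLogLik t u₂) - outer t
  have hgap : 0 < gap p := by
    have h₁ := hr_near (-r) (by rw [abs_neg, abs_of_pos hr_pos])
    have h₂ := hr_near r (by rw [abs_of_pos hr_pos])
    rw [← sub_eq_add_neg] at h₁
    exact sub_pos.2 (lt_min h₁ h₂)
  have hcont_t : Continuous gap := by
    simp only [gap, outer, bernLogLik]
    fun_prop
  obtain ⟨δ, hδ, hnear⟩ := Metric.eventually_nhds_iff.1 <|
    ((hcont_t.tendsto p).eventually (lt_mem_nhds (half_lt_self hgap))).and (Ioo_mem_nhds hq₁ hq₂)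
  refine ⟨r, hr_pos, δ, hδ, gap p / 2, half_pos hgap, fun t ht => ?_⟩
  obtain ⟨hgap_t, ht₁, ht₂⟩ := hnear (by rwa [Real.dist_eq])
  refine ⟨min (bernLogLik t u₁) (bernLogLik t u₂), fun η hη => ?_, fun η hη => ?_⟩
  · have hout : F η ≤ q₁ ∨ q₂ ≤ F η := by
      rcases le_abs'.1 hη with h | h
      · exact Or.inl (hF.monotone (by linarith))
      · exact Or.inr (hF.monotone (by linarith))
    have := bernLogLik_le_max (hF0 _) (hF1 _) ⟨ht₁.le, ht₂.le⟩ ⟨hF0 η, hF1 η⟩ hout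
    simp only [gap] at hgap_t
    linarith
  · obtain ⟨h₁, h₂⟩ := abs_le.1 hη
    exact min_bernLogLik_le (hF0 _) (hF1 _) ⟨hF.monotone (by linarith), hF.monotone (by linarith)⟩

noncomputable def posteriorMean (h : ℝ → ℝ) : ℝ := (∫ η, η * h η) / ∫ η, h η

lemma abs_posteriorMean_sub_le {g w : ℝ → ℝ} {η₀ ε A B : ℝ} {J : Set ℝ}
    (hg0 : ∀ η, 0 ≤ g η) (hg : Integrable g) (hg₁ : Integrable fun η => η * g η)
    (hw : AEStronglyMeasurable w) (hw0 : ∀ η, 0 ≤ w η) (hw1 : ∀ η, w η ≤ 1) (hε : 0 ≤ ε)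
    (hout : ∀ η, ε ≤ |η - η₀| → w η ≤ A) (hJ : MeasurableSet J) (hin : ∀ η ∈ J, B ≤ w η)
    (hB : 0 < B) (hgJ : 0 < ∫ η in J, g η) :
    |posteriorMean (fun η => w η * g η) - η₀| ≤
      ε + A * (∫ η, |η - η₀| * g η) / (B * ∫ η in J, g η) := by
  have hA : 0 ≤ A := (hw0 _).trans (hout (η₀ + ε) (by simp [abs_of_nonneg hε]))
  have hw_bdd : ∀ᵐ η, ‖w η‖ ≤ 1 := ae_of_all _ fun η => by
    rw [Real.norm_of_nonneg (hw0 η)]; exact hw1 η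
  have hwg0 : ∀ η, 0 ≤ w η * g η := fun η => mul_nonneg (hw0 η) (hg0 η)
  have hgc : Integrable fun η => |η - η₀| * g η :=
    (hg₁.sub (hg.const_mul η₀)).abs.congr (ae_of_all _ fun η => by
      simp only [Pi.sub_apply, ← sub_mul, abs_mul, abs_of_nonneg (hg0 η)])
  have hwg : Integrable fun η => w η * g η := hg.bdd_mul hw hw_bdd
  have hηwg : Integrable fun η => η * (w η * g η) :=
    (hg₁.bdd_mul hw hw_bdd).congr (ae_of_all _ fun η => by ring)
  have hwgc : Integrable fun η => |η - η₀| * (w η * g η) :=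
    (hgc.bdd_mul hw hw_bdd).congr (ae_of_all _ fun η => by ring)
  set D := ∫ η, w η * g η
  set C := ∫ η, |η - η₀| * g η
  have hD : B * ∫ η in J, g η ≤ D :=
    calc B * ∫ η in J, g η = ∫ η in J, B * g η := (integral_const_mul _ _).symm
      _ ≤ ∫ η in J, w η * g η := setIntegral_mono_on (hg.const_mul B).integrableOn
          hwg.integrableOn hJ fun η hη => mul_le_mul_of_nonneg_right (hin η hη) (hg0 η)
      _ ≤ D := setIntegral_le_integral hwg (ae_of_all _ hwg0)
  have hD0 : 0 < D := (mul_pos hB hgJ).trans_le hD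
  have hpt : ∀ η, |η - η₀| * (w η * g η) ≤ ε * (w η * g η) + A * (|η - η₀| * g η) := by
    intro η
    rcases lt_or_ge (|η - η₀|) ε with h | h
    · nlinarith [hwg0 η, mul_nonneg hA (mul_nonneg (abs_nonneg (η - η₀)) (hg0 η))]
    · nlinarith [hout η h, hwg0 η, mul_nonneg (abs_nonneg (η - η₀)) (hg0 η)]
  have hnum : |(∫ η, η * (w η * g η)) - η₀ * D| ≤ ε * D + A * C :=
    calc |(∫ η, η * (w η * g η)) - η₀ * D| = |∫ η, (η - η₀) * (w η * g η)| := by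
          rw [← integral_const_mul, ← integral_sub hηwg (hwg.const_mul η₀)]
          simp only [sub_mul]
      _ ≤ ∫ η, |η - η₀| * (w η * g η) := by
          simpa only [abs_mul, abs_of_nonneg (hwg0 _)] using
            abs_integral_le_integral_abs (f := fun η => (η - η₀) * (w η * g η))
      _ ≤ ∫ η, (ε * (w η * g η) + A * (|η - η₀| * g η)) :=
          integral_mono hwgc ((hwg.const_mul ε).add (hgc.const_mul A)) hpt
      _ = ε * D + A * C := by
          rw [integral_add (hwg.const_mul ε) (hgc.const_mul A), integral_const_mul,
            integral_const_mul]
  calc |posteriorMean (fun η => w η * g η) - η₀| = |(∫ η, η * (w η * g η)) - η₀ * D| / D := by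
        rw [posteriorMean, div_sub' hD0.ne', abs_div, abs_of_pos hD0, mul_comm D]
    _ ≤ (ε * D + A * C) / D := by gcongr
    _ = ε + A * C / D := by field_simp
    _ ≤ ε + A * C / (B * ∫ η in J, g η) := by
        gcongr
        exact mul_nonneg hA (integral_nonneg fun η => mul_nonneg (abs_nonneg _) (hg0 η))

lemma pow_mul_one_sub_pow_eq_exp {u : ℝ} (hu₀ : 0 < u) (hu₁ : u < 1) {k m : ℕ} (hk : k ≤ m)
    (hm : 0 < m) : u ^ k * (1 - u) ^ (m - k) = Real.exp (m * bernLogLik (k / m) u) := by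
  have hm' : (m : ℝ) ≠ 0 := Nat.cast_ne_zero.2 hm.ne'
  have h : (m : ℝ) * bernLogLik (k / m) u = k * Real.log u + (m - k : ℕ) * Real.log (1 - u) := by
    rw [bernLogLik, Nat.cast_sub hk]
    field_simp
  rw [h, Real.exp_add, Real.exp_nat_mul, Real.exp_nat_mul, Real.exp_log hu₀,
    Real.exp_log (sub_pos.2 hu₁)]

theorem exists_eventually_abs_posteriorMean_sub_le {F g : ℝ → ℝ} (hF : StrictMono F)
    (hFc : Continuous F) (hF0 : ∀ x, 0 < F x) (hF1 : ∀ x, F x < 1) (hg0 : ∀ η, 0 < g η)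
    (hg : Integrable g) (hg₁ : Integrable fun η => η * g η) (η₀ : ℝ) {ε : ℝ} (hε : 0 < ε) :
    ∃ δ > 0, ∀ᶠ m : ℕ in atTop, ∀ k ≤ m, |(k : ℝ) / m - F η₀| < δ →
      |posteriorMean (fun η => F η ^ k * (1 - F η) ^ (m - k) * g η) - η₀| ≤ ε := by
  obtain ⟨r, hr, δ, hδ, γ, hγ, hgap⟩ := exists_bernLogLik_gap hF hFc hF0 hF1 η₀ (half_pos hε)
  set J := Set.Icc (η₀ - r) (η₀ + r)
  have hgJ : 0 < ∫ η in J, g η := setIntegral_pos_of_pos hg hg0 (by simp [J]; linarith)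
  set C := ∫ η, |η - η₀| * g η
  have hdecay : Tendsto (fun m : ℕ => Real.exp (-(m * γ)) * C / ∫ η in J, g η) atTop (𝓝 0) := by
    simpa using ((Real.tendsto_exp_neg_atTop_nhds_zero.comp
      (tendsto_natCast_atTop_atTop.atTop_mul_const hγ)).mul_const C).div_const _
  refine ⟨δ, hδ, ?_⟩
  filter_upwards [eventually_gt_atTop 0, hdecay.eventually (gt_mem_nhds (half_pos hε))]
    with m hm hsmall k hk ht
  obtain ⟨b, hb_out, hb_in⟩ := hgap _ ht
  set w := fun η => F η ^ k * (1 - F η) ^ (m - k)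
  have hw : ∀ η, w η = Real.exp (m * bernLogLik (k / m) (F η)) :=
    fun η => pow_mul_one_sub_pow_eq_exp (hF0 η) (hF1 η) hk hm
  have hw0 : ∀ η, 0 ≤ w η := fun η => (hw η).symm ▸ (Real.exp_pos _).le
  have hw1 : ∀ η, w η ≤ 1 := fun η =>
    have h1F : 0 ≤ 1 - F η := (sub_pos.2 (hF1 η)).le
    mul_le_one₀ (pow_le_one₀ (hF0 η).le (hF1 η).le) (pow_nonneg h1F _)
      (pow_le_one₀ h1F (by linarith [hF0 η]))
  have hout : ∀ η, ε / 2 ≤ |η - η₀| → w η ≤ Real.exp (m * (b - γ)) := fun η hη => by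
    rw [hw]
    exact Real.exp_le_exp.2 (mul_le_mul_of_nonneg_left (by linarith [hb_out η hη]) m.cast_nonneg)
  have hin : ∀ η ∈ J, Real.exp (m * b) ≤ w η := fun η hη => by
    rw [hw]
    refine Real.exp_le_exp.2 (mul_le_mul_of_nonneg_left (hb_in η ?_) m.cast_nonneg)
    exact abs_le.2 ⟨by linarith [hη.1], by linarith [hη.2]⟩
  have hbound := abs_posteriorMean_sub_le (fun η => (hg0 η).le) hg hg₁ (by fun_prop) hw0 hw1
    (half_pos hε).le hout measurableSet_Icc hin (Real.exp_pos _) hgJ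
  have hratio : Real.exp (m * (b - γ)) * C / (Real.exp (m * b) * ∫ η in J, g η)
      = Real.exp (-(m * γ)) * C / ∫ η in J, g η := by
    rw [mul_sub, sub_eq_add_neg, Real.exp_add]
    field_simp
  linarith

theorem tendsto_measure_abs_average_sub_ge {Ω : Type*} [MeasurableSpace Ω] {P : Measure Ω}
    [IsProbabilityMeasure P] {Y : ℕ → Ω → ℝ} (hY : ∀ j, MemLp (Y j) 2 P)
    (hindep : Pairwise fun i j => IndepFun (Y i) (Y j) P) {p v : ℝ} (hmean : ∀ j, P[Y j] = p)
    (hvar : ∀ j, variance (Y j) P ≤ v) {δ : ℝ} (hδ : 0 < δ) :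
    Tendsto (fun m : ℕ => P {ω | δ ≤ |(∑ j ∈ Finset.range m, Y j ω) / m - p|}) atTop
      (𝓝 0) := by
  have hbound : ∀ m : ℕ, 0 < m →
      P {ω | δ ≤ |(∑ j ∈ Finset.range m, Y j ω) / m - p|} ≤ ENNReal.ofReal (v / δ ^ 2 / m) := by
    intro m hm
    have hm' : (0 : ℝ) < m := Nat.cast_pos.2 hm
    set S := ∑ j ∈ Finset.range m, Y j
    have hSω : ∀ ω, S ω = ∑ j ∈ Finset.range m, Y j ω := fun ω => Finset.sum_apply _ _ _
    have hS : MemLp S 2 P := memLp_finsetSum' _ fun j _ => hY j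
    have hS_mean : P[S] = m * p := by
      simp_rw [hSω]
      rw [integral_finsetSum _ fun j _ => (hY j).integrable one_le_two]
      simp [hmean]
    have hS_var : variance S P ≤ m * v := by
      rw [IndepFun.variance_sum (fun j _ => hY j) fun i _ j _ hij => hindep hij]
      simpa using Finset.sum_le_sum fun j (_ : j ∈ Finset.range m) => hvar j
    calc P {ω | δ ≤ |(∑ j ∈ Finset.range m, Y j ω) / m - p|}
        ≤ P {ω | m * δ ≤ |S ω - P[S]|} := by
          refine measure_mono fun ω hω => ?_
          have h : S ω - P[S] = m * ((∑ j ∈ Finset.range m, Y j ω) / m - p) := by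
            rw [hS_mean, hSω]
            field_simp
          simp only [Set.mem_ofPred_eq, h, abs_mul, abs_of_pos hm'] at hω ⊢
          exact mul_le_mul_of_nonneg_left hω hm'.le
      _ ≤ ENNReal.ofReal (variance S P / (m * δ) ^ 2) :=
          meas_ge_le_variance_div_sq hS (mul_pos hm' hδ)
      _ ≤ ENNReal.ofReal (v / δ ^ 2 / m) := by
          refine ENNReal.ofReal_le_ofReal ?_
          calc variance S P / (m * δ) ^ 2 ≤ m * v / (m * δ) ^ 2 := by gcongr
            _ = v / δ ^ 2 / m := by field_simp
  have hlim : Tendsto (fun m : ℕ => ENNReal.ofReal (v / δ ^ 2 / m)) atTop (𝓝 0) := by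
    simpa using ENNReal.tendsto_ofReal (tendsto_const_div_atTop_nhds_zero_nat (v / δ ^ 2))
  exact tendsto_of_tendsto_of_tendsto_of_le_of_le' tendsto_const_nhds hlim
    (Eventually.of_forall fun _ => zero_le) ((eventually_gt_atTop 0).mono hbound)

lemma prod_probitDens (y : ℕ → ℝ) (m : ℕ) (η : ℝ) :
    ∏ j ∈ Finset.range m, probitDens (y j) η =
      stdPhiCDF η ^ #{j ∈ Finset.range m | y j = 1} *
        (1 - stdPhiCDF η) ^ (m - #{j ∈ Finset.range m | y j = 1}) := by
  simp only [probitDens]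
  rw [Finset.prod_ite, Finset.prod_const, Finset.prod_const, Finset.filter_not,
    Finset.card_sdiff_of_subset (Finset.filter_subset _ _), Finset.card_range]

lemma sum_eq_card_filter_eq_one {y : ℕ → ℝ} (hy : ∀ j, y j = 0 ∨ y j = 1) (m : ℕ) :
    ∑ j ∈ Finset.range m, y j = #{j ∈ Finset.range m | y j = 1} := by
  rw [Finset.natCast_card_filter]
  refine Finset.sum_congr rfl fun j _ => ?_
  rcases hy j with h | h <;> simp [h]

lemma integral_eq_measureReal_of_zero_or_one {Ω : Type*} [MeasurableSpace Ω] {P : Measure Ω}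
    {Y : Ω → ℝ} (hY : Measurable Y) (hval : ∀ ω, Y ω = 0 ∨ Y ω = 1) :
    P[Y] = P.real {ω | Y ω = 1} := by
  have hind : Y = {ω | Y ω = 1}.indicator 1 := by
    funext ω
    rcases hval ω with h | h <;> simp [h]
  conv_lhs => rw [hind]
  exact integral_indicator_one (hY (measurableSet_singleton 1))

/-- The posterior mean of the linear predictor converges in probability to its true value η0. -/
theorem stmt4 {Ω : Type*} [MeasurableSpace Ω] (P : Measure Ω) [IsProbabilityMeasure P]
    (η0 x β σ : ℝ) (hσ : 0 < σ)
    (Y : ℕ → Ω → ℝ) (hmeas : ∀ j, Measurable (Y j))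
    (hindep : iIndepFun Y P)
    (hval : ∀ j ω, Y j ω = 0 ∨ Y j ω = 1)
    (hdist : ∀ j, P {ω | Y j ω = 1} = ENNReal.ofReal (stdPhiCDF η0)) :
    ∀ ε > 0,
      Tendsto
        (fun m => P {ω |
          ε < |(∫ η : ℝ,
                  η * ((∏ j ∈ Finset.range m, probitDens (Y j ω) η) * (σ⁻¹ * stdPhi ((η - β * x) / σ))))
               / (∫ η : ℝ,
                  (∏ j ∈ Finset.range m, probitDens (Y j ω) η) * (σ⁻¹ * stdPhi ((η - β * x) / σ)))
               - η0|})
        atTop (nhds 0) := by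
  intro ε hε
  set v : ℝ≥0 := ⟨σ ^ 2, sq_nonneg σ⟩
  have hv : v ≠ 0 := fun hv => (pow_pos hσ 2).ne' (congrArg NNReal.toReal hv)
  obtain ⟨δ, hδ, hconc⟩ := exists_eventually_abs_posteriorMean_sub_le stdPhiCDF_strictMono
    continuous_stdPhiCDF stdPhiCDF_pos stdPhiCDF_lt_one (gaussianPDFReal_pos (β * x) v · hv)
    (integrable_gaussianPDFReal _ _) (integrable_mul_gaussianPDFReal _ _) η0 hε
  have hIcc : ∀ j ω, Y j ω ∈ Set.Icc (0 : ℝ) 1 := fun j ω => by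
    rcases hval j ω with h | h <;> simp [h]
  have hmean : ∀ j, P[Y j] = stdPhiCDF η0 := fun j => by
    rw [integral_eq_measureReal_of_zero_or_one (hmeas j) (hval j), measureReal_def, hdist,
      ENNReal.toReal_ofReal (stdPhiCDF_pos η0).le]
  have hlln := tendsto_measure_abs_average_sub_ge
    (fun j => memLp_of_bounded (ae_of_all _ (hIcc j)) (hmeas j).aestronglyMeasurable 2)
    (fun i j hij => hindep.indepFun hij) hmean
    (fun j => variance_le_sq_of_bounded (ae_of_all _ (hIcc j)) (hmeas j).aemeasurable) hδ
  refine tendsto_of_tendsto_of_tendsto_of_le_of_le' tendsto_const_nhds hlln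
    (Eventually.of_forall fun _ => zero_le) ?_
  filter_upwards [hconc] with m hm
  refine measure_mono fun ω hω => ?_
  simp_rw [prod_probitDens, inv_mul_stdPhi_div_eq_gaussianPDFReal hσ] at hω
  by_contra hfar
  rw [Set.mem_ofPred_eq, not_le, sum_eq_card_filter_eq_one (hval · ω)] at hfar
  exact not_le.2 hω (hm _ ((Finset.card_filter_le _ _).trans (Finset.card_range m).le) hfar)
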